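/- arXiv:2604.01211 — 3 statements merged into one kernel-verified Lean document; each statement's English description precedes it below -/
import Mathlib

section
/- Second derivative formula: with f(ρ) = tr((C_x⁻¹ + Hᵀ diag(ρ) H)⁻¹) and C_ε = (C_x⁻¹ + Hᵀ diag(ρ) H)⁻¹, the second partial derivative ∂²f/∂ρ_j ∂ρ_i equals 2 tr(C_ε h_i h_iᵀ C_ε h_j h_jᵀ C_ε) = 2 (h_iᵀ C_ε h_j)(h_iᵀ C_ε² h_j). -/
/-!
Along a coordinate line the matrix `C_x⁻¹ + Hᵀ diag(ρ) H` moves by the rank-one matrix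
`h_k h_kᵀ`, so the derivative of inversion, `d(A⁻¹) = -A⁻¹ (dA) A⁻¹`, gives
`∂f/∂ρ_i = -tr(C_ε h_i h_iᵀ C_ε)`. Differentiating once more in `ρ_j` with the product rule yields
`tr(C_ε h_j h_jᵀ C_ε h_i h_iᵀ C_ε) + tr(C_ε h_i h_iᵀ C_ε h_j h_jᵀ C_ε)`, and by cyclicity of the
trace and symmetry of `C_ε` both terms equal `(h_iᵀ C_ε h_j)(h_iᵀ C_ε² h_j)`.
-/

open Matrix

section RingInverse

variable {𝕜 R : Type*} [NontriviallyNormedField 𝕜] [NormedRing R] [HasSummableGeomSeries R]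
  [NormedAlgebra 𝕜 R]

theorem HasDerivAt.ringInverse {F : 𝕜 → R} {F' : R} {x : 𝕜} (hF : HasDerivAt F F' x)
    (hx : IsUnit (F x)) :
    HasDerivAt (fun t => Ring.inverse (F t))
      (-(Ring.inverse (F x) * F' * Ring.inverse (F x))) x := by
  obtain ⟨u, hu⟩ := hx
  have hinv := hasFDerivAt_ringInverse (𝕜 := 𝕜) u
  rw [hu] at hinv
  have hcomp := hinv.comp_hasDerivAt x hF
  rw [← hu, Ring.inverse_unit]
  exact hcomp

end RingInverse

section MatrixCalculus

attribute [local instance] Matrix.linftyOpNormedRing Matrix.linftyOpNormedAlgebra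

variable {n 𝕜 : Type*} [Fintype n] [DecidableEq n] [RCLike 𝕜]

theorem HasDerivAt.matrix_inv {F : 𝕜 → Matrix n n 𝕜} {F' : Matrix n n 𝕜} {x : 𝕜}
    (hF : HasDerivAt F F' x) (hx : IsUnit (F x)) :
    HasDerivAt (fun t => (F t)⁻¹) (-((F x)⁻¹ * F' * (F x)⁻¹)) x := by
  simp only [nonsing_inv_eq_ringInverse]
  exact hF.ringInverse hx

theorem HasDerivAt.matrix_trace {F : 𝕜 → Matrix n n 𝕜} {F' : Matrix n n 𝕜} {x : 𝕜}
    (hF : HasDerivAt F F' x) : HasDerivAt (fun t => (F t).trace) F'.trace x :=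
  (traceLinearMap n 𝕜 𝕜).toContinuousLinearMap.hasFDerivAt.comp_hasDerivAt x hF

theorem Matrix.hasDerivAt_inv_add_sub_smul {A : Matrix n n 𝕜} (hA : IsUnit A)
    (E : Matrix n n 𝕜) (c : 𝕜) :
    HasDerivAt (fun s => (A + (s - c) • E)⁻¹) (-(A⁻¹ * E * A⁻¹)) c := by
  have hline := (((hasDerivAt_id c).sub_const c).smul_const E).const_add A
  simp only [id, one_smul] at hline
  simpa using hline.matrix_inv (by simpa using hA)

end MatrixCalculus

theorem Matrix.transpose_mul_diagonal_update_mul {ι n R : Type*} [Fintype ι] [DecidableEq ι]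
    [CommRing R] (H : Matrix ι n R) (q : ι → R) (k : ι) (s : R) :
    Hᵀ * diagonal (Function.update q k s) * H
      = Hᵀ * diagonal q * H + (s - q k) • vecMulVec (H k) (H k) := by
  have hq : diagonal (Function.update q k s)
      = diagonal q + diagonal (Pi.single k (s - q k)) := by
    rw [diagonal_add]
    congr 1
    ext l
    rcases eq_or_ne l k with rfl | hl <;> simp [*]
  rw [hq, Matrix.mul_add, Matrix.add_mul]
  congr 1
  ext a b
  simp [mul_apply, diagonal_apply, Pi.single_apply, vecMulVec_apply]
  ring

theorem Matrix.PosDef.add_transpose_mul_diagonal_mul {ι n : Type*} [Fintype ι] [DecidableEq ι]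
    [Fintype n] {A : Matrix n n ℝ} (hA : A.PosDef) (H : Matrix ι n ℝ) {p : ι → ℝ}
    (hp : ∀ k, 0 ≤ p k) : (A + Hᵀ * diagonal p * H).PosDef :=
  hA.add_posSemidef (by simpa using (posSemidef_diagonal_iff.2 hp).conjTranspose_mul_mul_same H)

theorem Matrix.IsSymm.dotProduct_mulVec_comm {n R : Type*} [Fintype n] [CommSemiring R]
    {C : Matrix n n R} (hC : C.IsSymm) (u v : n → R) : u ⬝ᵥ C *ᵥ v = v ⬝ᵥ C *ᵥ u := by
  rw [dotProduct_mulVec, ← mulVec_transpose, hC.eq, dotProduct_comm]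

theorem Matrix.IsSymm.trace_mul_vecMulVec_mul_vecMulVec_mul {n R : Type*} [Fintype n]
    [DecidableEq n] [CommRing R] {C : Matrix n n R} (hC : C.IsSymm) (u v : n → R) :
    (C * vecMulVec u u * C * vecMulVec v v * C).trace
      = (u ⬝ᵥ C *ᵥ v) * (u ⬝ᵥ (C ^ 2) *ᵥ v) := by
  have hCw : ∀ w, w ᵥ* C = C *ᵥ w := fun w => by rw [← vecMul_transpose, hC.eq]
  rw [sq, ← mulVec_mulVec, dotProduct_mulVec, dotProduct_mulVec, hCw]
  simp only [mul_vecMulVec, vecMulVec_mul, trace_vecMulVec, hCw, vecMulVec_mulVec]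
  rw [op_smul_eq_smul, smul_dotProduct, smul_eq_mul]

section ErrorCovariance

variable {ι n : Type*} [Fintype ι] [DecidableEq ι] [Fintype n] [DecidableEq n]

/-- The matrix `C_ε(ρ)`. -/
noncomputable def errorCov (Cx : Matrix n n ℝ) (H : Matrix ι n ℝ) (p : ι → ℝ) : Matrix n n ℝ :=
  (Cx⁻¹ + Hᵀ * diagonal p * H)⁻¹

variable {Cx : Matrix n n ℝ} (H : Matrix ι n ℝ) {q : ι → ℝ}

theorem errorCov_isSymm (hCx : Cx.PosDef) (hq : ∀ k, 0 ≤ q k) : (errorCov Cx H q).IsSymm := by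
  simpa [errorCov] using (hCx.inv.add_transpose_mul_diagonal_mul H hq).inv.isHermitian

attribute [local instance] Matrix.linftyOpNormedRing Matrix.linftyOpNormedAlgebra

theorem hasDerivAt_errorCov_update (hCx : Cx.PosDef) (hq : ∀ k, 0 ≤ q k) (k : ι) :
    HasDerivAt (fun s => errorCov Cx H (Function.update q k s))
      (-(errorCov Cx H q * vecMulVec (H k) (H k) * errorCov Cx H q)) (q k) := by
  simp only [errorCov, transpose_mul_diagonal_update_mul, ← add_assoc]
  exact hasDerivAt_inv_add_sub_smul (hCx.inv.add_transpose_mul_diagonal_mul H hq).isUnit _ _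

theorem hasDerivAt_trace_errorCov_update (hCx : Cx.PosDef) (hq : ∀ k, 0 ≤ q k) (k : ι) :
    HasDerivAt (fun s => (errorCov Cx H (Function.update q k s)).trace)
      (-(errorCov Cx H q * vecMulVec (H k) (H k) * errorCov Cx H q).trace) (q k) := by
  simpa only [trace_neg] using (hasDerivAt_errorCov_update H hCx hq k).matrix_trace

theorem hasDerivAt_trace_errorCov_mul_vecMulVec_mul_errorCov_update (hCx : Cx.PosDef)
    (hq : ∀ k, 0 ≤ q k) (i j : ι) :
    HasDerivAt (fun t => -(errorCov Cx H (Function.update q j t) * vecMulVec (H i) (H i)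
        * errorCov Cx H (Function.update q j t)).trace)
      (2 * (H i ⬝ᵥ errorCov Cx H q *ᵥ H j) * (H i ⬝ᵥ (errorCov Cx H q ^ 2) *ᵥ H j)) (q j) := by
  have hC := hasDerivAt_errorCov_update H hCx hq j
  have h := ((hC.mul_const (vecMulVec (H i) (H i))).mul hC).matrix_trace.neg
  rw [Function.update_eq_self] at h
  refine h.congr_deriv ?_
  have hsymm := errorCov_isSymm H hCx hq
  simp only [neg_mul, mul_neg, ← mul_assoc, trace_neg, trace_add, neg_add, neg_neg,
    hsymm.trace_mul_vecMulVec_mul_vecMulVec_mul, hsymm.dotProduct_mulVec_comm (H j) (H i),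
    (hsymm.pow 2).dotProduct_mulVec_comm (H j) (H i)]
  ring

end ErrorCovariance

/-- Second derivative formula: with
`f(ρ) = tr((C_x⁻¹ + Hᵀ diag(ρ) H)⁻¹)` and `C_ε = (C_x⁻¹ + Hᵀ diag(ρ) H)⁻¹`,
the second partial derivative `∂²f/∂ρ_j ∂ρ_i` equals
`2 (h_iᵀ C_ε h_j)(h_iᵀ C_ε² h_j)`. -/
theorem stmt8 {m d : ℕ} (H : Matrix (Fin m) (Fin d) ℝ)
    (Cx : Matrix (Fin d) (Fin d) ℝ) (hCx : Cx.PosDef)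
    (ρ : Fin m → ℝ) (hρ : ∀ i, 0 < ρ i) (i j : Fin m)
    (f : (Fin m → ℝ) → ℝ)
    (hf : f = fun p => (Cx⁻¹ + Hᵀ * Matrix.diagonal p * H)⁻¹.trace)
    (Ce : Matrix (Fin d) (Fin d) ℝ)
    (hCe : Ce = (Cx⁻¹ + Hᵀ * Matrix.diagonal ρ * H)⁻¹) :
    HasDerivAt
      (fun t : ℝ =>
        deriv (fun s : ℝ => f (Function.update (Function.update ρ j t) i s))
          (Function.update ρ j t i))
      (2 * (H i ⬝ᵥ Ce *ᵥ H j) * (H i ⬝ᵥ (Ce ^ 2) *ᵥ H j))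
      (ρ j) := by
  change f = fun p => (errorCov Cx H p).trace at hf
  change Ce = errorCov Cx H ρ at hCe
  subst hf hCe
  have hρ' : ∀ k, 0 ≤ ρ k := fun k => (hρ k).le
  refine (hasDerivAt_trace_errorCov_mul_vecMulVec_mul_errorCov_update H hCx hρ' i j)
    |>.congr_of_eventuallyEq ?_
  filter_upwards [Ioi_mem_nhds (hρ j)] with t ht
  have hq : ∀ k, 0 ≤ Function.update ρ j t k := by
    intro k
    rcases eq_or_ne k j with rfl | hk
    · simpa using ht.le
    · simpa [hk] using hρ' k
  exact (hasDerivAt_trace_errorCov_update H hCx hq i).deriv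
end

section
/- Hessian entry bound: in the setting above, ρ_i ρ_j |∂²f/∂ρ_j ∂ρ_i| ≤ 2‖C_x‖₂ for all i, j. -/
/-!
Write `P = C_x⁻¹ + Σ_k ρ_k h_k h_kᵀ`, so `C_ε = P⁻¹`, and put `u = C_ε h_k`. Then
`h_kᵀ C_ε h_k = uᵀ P u = uᵀ C_x⁻¹ u + Σ_l ρ_l (h_lᵀ u)²`, and `h_kᵀ u = h_kᵀ C_ε h_k`.
Keeping only the `k`-th term gives `ρ_k h_kᵀ C_ε h_k ≤ 1`; keeping only `uᵀ C_x⁻¹ u` and using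
`‖u‖² ≤ ‖C_x‖ uᵀ C_x⁻¹ u` gives `ρ_k ‖C_ε h_k‖² ≤ ‖C_x‖`. Cauchy–Schwarz for the form of `C_ε`
bounds the first factor of the Hessian entry, and the Euclidean Cauchy–Schwarz inequality bounds
the second, `h_iᵀ C_ε² h_j = ⟨C_ε h_i, C_ε h_j⟩`.
-/

open Matrix

/-- Spectral norm (ℓ2 operator norm) of a real square matrix. -/
noncomputable def specNorm {d : ℕ} (A : Matrix (Fin d) (Fin d) ℝ) : ℝ :=
  ‖Matrix.toEuclideanCLM (𝕜 := ℝ) A‖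

theorem mul_mul_sq_le_sq_of_sq_le_mul {p q x y z c : ℝ} (hp : 0 ≤ p) (hq : 0 ≤ q)
    (hx : 0 ≤ x) (hy : 0 ≤ y) (hz : z ^ 2 ≤ x * y) (hpx : p * x ≤ c) (hqy : q * y ≤ c) :
    p * q * z ^ 2 ≤ c ^ 2 :=
  calc p * q * z ^ 2 ≤ p * q * (x * y) := by gcongr
    _ = (p * x) * (q * y) := by ring
    _ ≤ c * c := mul_le_mul hpx hqy (by positivity) (hpx.trans' (by positivity))
    _ = c ^ 2 := (sq c).symm

theorem mul_abs_mul_le_of_mul_sq_le {r a b c : ℝ} (hr : 0 ≤ r) (hc : 0 ≤ c)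
    (ha : r * a ^ 2 ≤ 1) (hb : r * b ^ 2 ≤ c ^ 2) : r * |a * b| ≤ c := by
  have hsq : (r * (a * b)) ^ 2 ≤ c ^ 2 :=
    calc (r * (a * b)) ^ 2 = (r * a ^ 2) * (r * b ^ 2) := by ring
      _ ≤ 1 * c ^ 2 := mul_le_mul ha hb (by positivity) zero_le_one
      _ = c ^ 2 := one_mul _
  rw [← abs_of_nonneg hr, ← abs_mul]
  exact abs_le_of_sq_le_sq hsq hc

namespace Matrix

variable {n ι : Type*} [Fintype n] [Fintype ι]

theorem PosSemidef.dotProduct_mulVec_sq_le {A : Matrix n n ℝ} (hA : A.PosSemidef) (x y : n → ℝ) :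
    (x ⬝ᵥ A *ᵥ y) ^ 2 ≤ (x ⬝ᵥ A *ᵥ x) * (y ⬝ᵥ A *ᵥ y) := by
  let := A.toSeminormedAddCommGroup hA
  let := A.toInnerProductSpace hA
  have inner_eq (u v : n → ℝ) : (inner ℝ u v : ℝ) = u ⬝ᵥ A *ᵥ v := by
    change (A *ᵥ v) ⬝ᵥ star u = _
    rw [star_trivial, dotProduct_comm]
  simpa only [sq, inner_eq] using real_inner_mul_inner_self_le x y

theorem PosSemidef.dotProduct_mulVec_self_nonneg {A : Matrix n n ℝ} (hA : A.PosSemidef)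
    (x : n → ℝ) : 0 ≤ x ⬝ᵥ A *ᵥ x := by
  simpa only [star_trivial] using hA.dotProduct_mulVec_nonneg x

theorem dotProduct_self_nonneg (x : n → ℝ) : 0 ≤ x ⬝ᵥ x :=
  Finset.sum_nonneg fun i _ => mul_self_nonneg (x i)

theorem dotProduct_sq_le (x y : n → ℝ) : (x ⬝ᵥ y) ^ 2 ≤ (x ⬝ᵥ x) * (y ⬝ᵥ y) := by
  classical
  simpa only [one_mulVec] using PosSemidef.one.dotProduct_mulVec_sq_le x y

theorem IsHermitian.dotProduct_sq_mulVec [DecidableEq n] {A : Matrix n n ℝ} (hA : A.IsHermitian)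
    (x y : n → ℝ) : x ⬝ᵥ (A ^ 2) *ᵥ y = (A *ᵥ x) ⬝ᵥ (A *ᵥ y) := by
  have hAT : Aᵀ = A := by simpa only [conjTranspose_eq_transpose_of_trivial] using hA.eq
  rw [sq, ← mulVec_mulVec, dotProduct_mulVec, ← mulVec_transpose, hAT]

theorem dotProduct_nonsing_inv_mulVec [DecidableEq n] {M : Matrix n n ℝ} (hM : IsUnit M.det)
    (v : n → ℝ) : v ⬝ᵥ M⁻¹ *ᵥ v = (M⁻¹ *ᵥ v) ⬝ᵥ M *ᵥ (M⁻¹ *ᵥ v) := by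
  rw [mulVec_mulVec, mul_nonsing_inv _ hM, one_mulVec, dotProduct_comm]

theorem dotProduct_mulVec_le_specNorm_mul {d : ℕ} (A : Matrix (Fin d) (Fin d) ℝ)
    (x : Fin d → ℝ) : x ⬝ᵥ A *ᵥ x ≤ specNorm A * (x ⬝ᵥ x) := by
  set T := toEuclideanCLM (𝕜 := ℝ) A
  set e : EuclideanSpace ℝ (Fin d) := WithLp.toLp 2 x
  have inner_self : x ⬝ᵥ x = inner ℝ e e := by
    rw [EuclideanSpace.inner_eq_star_dotProduct, star_trivial]
  rw [← inner_toEuclideanCLM A e e, inner_self, real_inner_self_eq_norm_mul_norm]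
  calc inner ℝ e (T e) ≤ ‖e‖ * ‖T e‖ := real_inner_le_norm _ _
    _ ≤ ‖e‖ * (‖T‖ * ‖e‖) := by gcongr; exact T.le_opNorm e
    _ = ‖T‖ * (‖e‖ * ‖e‖) := by ring

theorem PosDef.dotProduct_self_le_specNorm_mul {d : ℕ} {A : Matrix (Fin d) (Fin d) ℝ}
    (hA : A.PosDef) (u : Fin d → ℝ) : u ⬝ᵥ u ≤ specNorm A * (u ⬝ᵥ A⁻¹ *ᵥ u) := by
  have hdet : IsUnit A.det := hA.isUnit.map detMonoidHom
  -- Cauchy–Schwarz for the form of `A`, applied to `u` and `A⁻¹ u`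
  have cs := hA.posSemidef.dotProduct_mulVec_sq_le u (A⁻¹ *ᵥ u)
  rw [← dotProduct_nonsing_inv_mulVec hdet, mulVec_mulVec, mul_nonsing_inv _ hdet,
    one_mulVec] at cs
  have hq := hA.inv.posSemidef.dotProduct_mulVec_self_nonneg u
  have hsq : (u ⬝ᵥ u) * (u ⬝ᵥ u) ≤ (u ⬝ᵥ u) * (specNorm A * (u ⬝ᵥ A⁻¹ *ᵥ u)) :=
    calc (u ⬝ᵥ u) * (u ⬝ᵥ u) = (u ⬝ᵥ u) ^ 2 := (sq _).symm
      _ ≤ (u ⬝ᵥ A *ᵥ u) * (u ⬝ᵥ A⁻¹ *ᵥ u) := cs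
      _ ≤ (specNorm A * (u ⬝ᵥ u)) * (u ⬝ᵥ A⁻¹ *ᵥ u) :=
        mul_le_mul_of_nonneg_right (dotProduct_mulVec_le_specNorm_mul A u) hq
      _ = (u ⬝ᵥ u) * (specNorm A * (u ⬝ᵥ A⁻¹ *ᵥ u)) := by ring
  rcases (dotProduct_self_nonneg u).eq_or_lt with h0 | hpos
  · rw [← h0]
    exact mul_nonneg (norm_nonneg _) hq
  · exact le_of_mul_le_mul_left hsq hpos

section PosteriorPrecision

def posteriorPrecision (B : Matrix n n ℝ) (ρ : ι → ℝ) (h : ι → n → ℝ) : Matrix n n ℝ :=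
  B + ∑ k, ρ k • vecMulVec (h k) (h k)

variable {B : Matrix n n ℝ} {ρ : ι → ℝ} {h : ι → n → ℝ}

theorem dotProduct_posteriorPrecision_mulVec (u : n → ℝ) :
    u ⬝ᵥ posteriorPrecision B ρ h *ᵥ u = u ⬝ᵥ B *ᵥ u + ∑ k, ρ k * (h k ⬝ᵥ u) ^ 2 := by
  simp only [posteriorPrecision, add_mulVec, sum_mulVec, smul_mulVec, vecMulVec_mulVec,
    dotProduct_add, dotProduct_sum, dotProduct_smul, op_smul_eq_smul, smul_eq_mul,
    dotProduct_comm u (h _)]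
  congr 1
  exact Finset.sum_congr rfl fun k _ => by ring

theorem PosDef.posteriorPrecision (hB : B.PosDef) (hρ : ∀ k, 0 ≤ ρ k) :
    (posteriorPrecision B ρ h).PosDef :=
  hB.add_posSemidef <| posSemidef_sum _ fun k _ =>
    (posSemidef_vecMulVec_self_star (h k)).smul (hρ k)

variable [DecidableEq n]

theorem dotProduct_posteriorPrecision_inv_mulVec (hB : B.PosDef) (hρ : ∀ k, 0 ≤ ρ k)
    (v : n → ℝ) :
    v ⬝ᵥ (posteriorPrecision B ρ h)⁻¹ *ᵥ v
      = ((posteriorPrecision B ρ h)⁻¹ *ᵥ v) ⬝ᵥ B *ᵥ ((posteriorPrecision B ρ h)⁻¹ *ᵥ v)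
        + ∑ k, ρ k * (h k ⬝ᵥ (posteriorPrecision B ρ h)⁻¹ *ᵥ v) ^ 2 := by
  rw [dotProduct_nonsing_inv_mulVec ((hB.posteriorPrecision hρ).isUnit.map detMonoidHom),
    dotProduct_posteriorPrecision_mulVec]

theorem dotProduct_mulVec_le_dotProduct_posteriorPrecision_inv_mulVec (hB : B.PosDef)
    (hρ : ∀ k, 0 ≤ ρ k) (v : n → ℝ) :
    ((posteriorPrecision B ρ h)⁻¹ *ᵥ v) ⬝ᵥ B *ᵥ ((posteriorPrecision B ρ h)⁻¹ *ᵥ v)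
      ≤ v ⬝ᵥ (posteriorPrecision B ρ h)⁻¹ *ᵥ v := by
  rw [dotProduct_posteriorPrecision_inv_mulVec hB hρ]
  exact le_add_of_nonneg_right <| Finset.sum_nonneg fun k _ => mul_nonneg (hρ k) (sq_nonneg _)

theorem mul_dotProduct_posteriorPrecision_inv_mulVec_le_one (hB : B.PosDef)
    (hρ : ∀ k, 0 ≤ ρ k) (k : ι) :
    ρ k * (h k ⬝ᵥ (posteriorPrecision B ρ h)⁻¹ *ᵥ h k) ≤ 1 := by
  set t := h k ⬝ᵥ (posteriorPrecision B ρ h)⁻¹ *ᵥ h k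
  have ht : 0 ≤ t := (hB.posteriorPrecision hρ).inv.posSemidef.dotProduct_mulVec_self_nonneg _
  have hBu := hB.posSemidef.dotProduct_mulVec_self_nonneg ((posteriorPrecision B ρ h)⁻¹ *ᵥ h k)
  have hterm : ρ k * t ^ 2 ≤ ∑ l, ρ l * (h l ⬝ᵥ (posteriorPrecision B ρ h)⁻¹ *ᵥ h k) ^ 2 :=
    Finset.single_le_sum (f := fun l => ρ l * (h l ⬝ᵥ (posteriorPrecision B ρ h)⁻¹ *ᵥ h k) ^ 2)
      (fun l _ => mul_nonneg (hρ l) (sq_nonneg _)) (Finset.mem_univ k)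
  have hself : ρ k * t ^ 2 ≤ t := by
    linarith [dotProduct_posteriorPrecision_inv_mulVec hB hρ (h := h) (h k)]
  rcases ht.eq_or_lt with h0 | hpos
  · rw [← h0, mul_zero]
    exact zero_le_one
  · refine le_of_mul_le_mul_right ?_ hpos
    rwa [one_mul, mul_assoc, ← sq]

end PosteriorPrecision

theorem mul_dotProduct_self_posteriorPrecision_inv_mulVec_le_specNorm {d : ℕ}
    {A : Matrix (Fin d) (Fin d) ℝ} (hA : A.PosDef) {ρ : ι → ℝ} (hρ : ∀ k, 0 ≤ ρ k)
    {h : ι → Fin d → ℝ} (k : ι) :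
    ρ k * (((posteriorPrecision A⁻¹ ρ h)⁻¹ *ᵥ h k) ⬝ᵥ ((posteriorPrecision A⁻¹ ρ h)⁻¹ *ᵥ h k))
      ≤ specNorm A := by
  set u := (posteriorPrecision A⁻¹ ρ h)⁻¹ *ᵥ h k
  have hu : u ⬝ᵥ u ≤ specNorm A * (h k ⬝ᵥ (posteriorPrecision A⁻¹ ρ h)⁻¹ *ᵥ h k) :=
    (hA.dotProduct_self_le_specNorm_mul u).trans <| mul_le_mul_of_nonneg_left
      (dotProduct_mulVec_le_dotProduct_posteriorPrecision_inv_mulVec hA.inv hρ _) (norm_nonneg _)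
  calc ρ k * (u ⬝ᵥ u)
      ≤ ρ k * (specNorm A * (h k ⬝ᵥ (posteriorPrecision A⁻¹ ρ h)⁻¹ *ᵥ h k)) := by gcongr; exact hρ k
    _ = specNorm A * (ρ k * (h k ⬝ᵥ (posteriorPrecision A⁻¹ ρ h)⁻¹ *ᵥ h k)) := by ring
    _ ≤ specNorm A * 1 := by
      gcongr
      · exact norm_nonneg _
      · exact mul_dotProduct_posteriorPrecision_inv_mulVec_le_one hA.inv hρ k
    _ = specNorm A := mul_one _

end Matrix

/-- Hessian entry bound: with
`C_ε = (C_x⁻¹ + Σ_k ρ_k h_k h_kᵀ)⁻¹`, `C_x ≻ 0`, `ρ > 0` componentwise, and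
`∂²f/∂ρ_j∂ρ_i = 2(h_iᵀ C_ε h_j)(h_iᵀ C_ε² h_j)`, one has
`ρ_i ρ_j |∂²f/∂ρ_j ∂ρ_i| ≤ 2‖C_x‖₂` for all `i, j`. -/
theorem stmt9 {m d : ℕ} (Cx : Matrix (Fin d) (Fin d) ℝ) (hCx : Cx.PosDef)
    (h : Fin m → Fin d → ℝ) (ρ : Fin m → ℝ) (hρ : ∀ i, 0 < ρ i)
    (Ce : Matrix (Fin d) (Fin d) ℝ)
    (hCe : Ce = (Cx⁻¹ + ∑ k, ρ k • Matrix.vecMulVec (h k) (h k))⁻¹)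
    (i j : Fin m) :
    ρ i * ρ j *
      |2 * (h i ⬝ᵥ Ce *ᵥ h j) * (h i ⬝ᵥ (Ce ^ 2) *ᵥ h j)| ≤
      2 * specNorm Cx := by
  have hρ₀ (k : Fin m) : 0 ≤ ρ k := (hρ k).le
  change Ce = (posteriorPrecision Cx⁻¹ ρ h)⁻¹ at hCe
  have hCe_pos : Ce.PosDef := hCe ▸ (hCx.inv.posteriorPrecision hρ₀).inv
  have ha : ρ i * ρ j * (h i ⬝ᵥ Ce *ᵥ h j) ^ 2 ≤ 1 := by
    rw [← one_pow 2]
    refine mul_mul_sq_le_sq_of_sq_le_mul (hρ₀ i) (hρ₀ j)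
      (hCe_pos.posSemidef.dotProduct_mulVec_self_nonneg _)
      (hCe_pos.posSemidef.dotProduct_mulVec_self_nonneg _)
      (hCe_pos.posSemidef.dotProduct_mulVec_sq_le _ _) ?_ ?_ <;> rw [hCe]
    exacts [mul_dotProduct_posteriorPrecision_inv_mulVec_le_one hCx.inv hρ₀ i,
      mul_dotProduct_posteriorPrecision_inv_mulVec_le_one hCx.inv hρ₀ j]
  have hb : ρ i * ρ j * ((Ce *ᵥ h i) ⬝ᵥ (Ce *ᵥ h j)) ^ 2 ≤ specNorm Cx ^ 2 := by
    refine mul_mul_sq_le_sq_of_sq_le_mul (hρ₀ i) (hρ₀ j) (dotProduct_self_nonneg _)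
      (dotProduct_self_nonneg _) (dotProduct_sq_le _ _) ?_ ?_ <;> rw [hCe]
    exacts [mul_dotProduct_self_posteriorPrecision_inv_mulVec_le_specNorm hCx hρ₀ i,
      mul_dotProduct_self_posteriorPrecision_inv_mulVec_le_specNorm hCx hρ₀ j]
  rw [hCe_pos.isHermitian.dotProduct_sq_mulVec, mul_assoc 2, abs_mul, abs_two, mul_left_comm]
  gcongr
  exact mul_abs_mul_le_of_mul_sq_le (mul_nonneg (hρ₀ i) (hρ₀ j)) (norm_nonneg _) ha hb
end

section
/- Nonconvex Frank–Wolfe rate: Let F : ℝ^m → ℝ be differentiable with L-Lipschitz gradient on a compact convex set B of diameter D, and let iterates b^{(t+1)} = b^{(t)} + γ_t (s^{(t)} − b^{(t)}) with s^{(t)} ∈ argmin_{s∈B} ⟨∇F(b^{(t)}), s⟩, gap g_t = ⟨b^{(t)} − s^{(t)}, ∇F(b^{(t)})⟩, and step γ_t = min{g_t/(L D²), 1}. Then min_{0≤t≤T} g_t ≤ max{2(F(b^{(0)}) − min_B F), L D²} / √(T+1). -/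
/-!
Along the segment from `x` to `y`, the Lipschitz bound on `fderiv ℝ F` gives the descent lemma
`F y ≤ F x + F' x (y - x) + L/2 ‖y - x‖²`. Applied to a Frank–Wolfe step of length `γ` it
shows that the objective drops by at least `γ g - γ² L D² / 2`, and the short step
`γ = min (g / (L D²)) 1` makes this at least `min (g² / (2 L D²)) (g / 2)`. Summing over
`t ≤ T` telescopes to at most `h₀ = F (b 0) - min_K F`, so the smallest gap `g` satisfies
`(T + 1) min (g² / (2 L D²)) (g / 2) ≤ h₀`; either alternative gives
`g ≤ max (2 h₀) (L D²) / √(T + 1)`.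
-/

open Set

variable {E : Type*} [NormedAddCommGroup E] [NormedSpace ℝ E]

theorem Convex.descent_lemma {K : Set E} (hK : Convex ℝ K) {F : E → ℝ}
    (hF : ∀ z ∈ K, DifferentiableAt ℝ F z) {L : ℝ}
    (hLip : ∀ x ∈ K, ∀ y ∈ K, ‖fderiv ℝ F x - fderiv ℝ F y‖ ≤ L * dist x y)
    {x y : E} (hx : x ∈ K) (hy : y ∈ K) :
    F y ≤ F x + fderiv ℝ F x (y - x) + L / 2 * ‖y - x‖ ^ 2 := by
  set v := y - x
  have hmem : ∀ t ∈ Icc (0 : ℝ) 1, x + t • v ∈ K := fun t ht =>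
    hK.add_smul_sub_mem hx hy ht
  -- `F` along the segment minus the quadratic upper model: the claim is `φ 1 ≤ φ 0`.
  set φ : ℝ → ℝ := fun t =>
    F (x + t • v) - t * fderiv ℝ F x v - L / 2 * t ^ 2 * ‖v‖ ^ 2
  have hφ : ∀ t ∈ Icc (0 : ℝ) 1, HasDerivAt φ
      (fderiv ℝ F (x + t • v) v - fderiv ℝ F x v - L * t * ‖v‖ ^ 2) t := by
    intro t ht
    have hc : HasDerivAt (fun t : ℝ => x + t • v) v t := by
      simpa using ((hasDerivAt_id t).smul_const v).const_add x
    refine ((((hF _ (hmem t ht)).hasFDerivAt.comp_hasDerivAt t hc).sub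
      ((hasDerivAt_id t).mul_const (fderiv ℝ F x v))).sub
      (((hasDerivAt_pow 2 t).const_mul (L / 2)).mul_const (‖v‖ ^ 2))).congr_deriv ?_
    ring
  have hφ'_nonpos : ∀ t ∈ Icc (0 : ℝ) 1,
      fderiv ℝ F (x + t • v) v - fderiv ℝ F x v - L * t * ‖v‖ ^ 2 ≤ 0 := by
    intro t ht
    have hdist : dist (x + t • v) x = t * ‖v‖ := by
      rw [dist_eq_norm, add_sub_cancel_left, norm_smul, Real.norm_of_nonneg ht.1]
    refine sub_nonpos.2 ?_
    calc fderiv ℝ F (x + t • v) v - fderiv ℝ F x v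
        = (fderiv ℝ F (x + t • v) - fderiv ℝ F x) v := rfl
      _ ≤ ‖fderiv ℝ F (x + t • v) - fderiv ℝ F x‖ * ‖v‖ :=
          (Real.le_norm_self _).trans (ContinuousLinearMap.le_opNorm _ _)
      _ ≤ L * (t * ‖v‖) * ‖v‖ := by
          gcongr; exact hdist ▸ hLip _ (hmem t ht) x hx
      _ = L * t * ‖v‖ ^ 2 := by ring
  have hanti : AntitoneOn φ (Icc 0 1) :=
    antitoneOn_of_hasDerivWithinAt_nonpos (convex_Icc 0 1)
      (fun t ht => (hφ t ht).continuousAt.continuousWithinAt)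
      (fun t ht => (hφ t (interior_subset ht)).hasDerivWithinAt)
      (fun t ht => hφ'_nonpos t (interior_subset ht))
  have h01 := hanti (left_mem_Icc.2 zero_le_one) (right_mem_Icc.2 zero_le_one) zero_le_one
  simp only [φ] at h01
  norm_num at h01
  rw [show x + v = y by simp [v]] at h01
  linarith

theorem min_le_short_step_decrease {g C : ℝ} (hC : 0 < C) :
    min (g ^ 2 / (2 * C)) (g / 2) ≤ min (g / C) 1 * g - min (g / C) 1 ^ 2 * C / 2 := by
  rcases le_total g C with hgC | hCg
  · rw [min_eq_left ((div_le_one hC).2 hgC)]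
    refine (min_le_left _ _).trans_eq ?_
    field_simp
    ring
  · rw [min_eq_right ((one_le_div hC).2 hCg)]
    refine (min_le_right _ _).trans ?_
    linarith

theorem le_max_div_sqrt_of_mul_min_le {g h C N : ℝ} (hg : 0 ≤ g) (hC : 0 < C) (hN : 1 ≤ N)
    (H : N * min (g ^ 2 / (2 * C)) (g / 2) ≤ h) : g ≤ max (2 * h) C / √N := by
  have hsqrtN : 0 < √N := Real.sqrt_pos.2 (by linarith)
  rw [le_div_iff₀ hsqrtN]
  rcases min_cases (g ^ 2 / (2 * C)) (g / 2) with ⟨hmin, -⟩ | ⟨hmin, -⟩ <;> rw [hmin] at H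
  · have h2Ch : (g * √N) ^ 2 ≤ C * (2 * h) := by
      rw [mul_pow, Real.sq_sqrt (by linarith)]
      rw [mul_div_assoc', div_le_iff₀ (by positivity)] at H
      linarith
    have : C * (2 * h) ≤ max (2 * h) C ^ 2 := by
      rw [sq]
      exact mul_le_mul (le_max_right _ _) (le_max_left _ _) (by nlinarith)
        (hC.le.trans (le_max_right _ _))
    exact le_of_sq_le_sq (h2Ch.trans this) (hC.le.trans (le_max_right _ _))
  · calc g * √N ≤ g * N := by gcongr; exact Real.sqrt_le_self_iff.2 (Or.inr hN)
      _ ≤ 2 * h := by linarith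
      _ ≤ max (2 * h) C := le_max_left _ _

theorem exists_le_max_div_sqrt_of_descent {f g : ℕ → ℝ} {C fmin : ℝ} (hC : 0 < C)
    (hg : ∀ t, 0 ≤ g t) (hdesc : ∀ t, min (g t ^ 2 / (2 * C)) (g t / 2) ≤ f t - f (t + 1))
    (hmin : ∀ t, fmin ≤ f t) (T : ℕ) :
    ∃ t ≤ T, g t ≤ max (2 * (f 0 - fmin)) C / √(T + 1) := by
  obtain ⟨t₀, ht₀, hle⟩ := (Finset.range (T + 1)).exists_min_image g ⟨0, by simp⟩
  refine ⟨t₀, Nat.lt_succ_iff.1 (Finset.mem_range.1 ht₀),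
    le_max_div_sqrt_of_mul_min_le (hg t₀) hC (by simp) ?_⟩
  calc (T + 1 : ℝ) * min (g t₀ ^ 2 / (2 * C)) (g t₀ / 2)
      = ∑ t ∈ Finset.range (T + 1), min (g t₀ ^ 2 / (2 * C)) (g t₀ / 2) := by simp
    _ ≤ ∑ t ∈ Finset.range (T + 1), (f t - f (t + 1)) := by
      refine Finset.sum_le_sum fun t ht => (min_le_min ?_ ?_).trans (hdesc t)
      · gcongr; exacts [hg t₀, hle t ht]
      · linarith [hle t ht]
    _ = f 0 - f (T + 1) := Finset.sum_range_sub' f (T + 1)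
    _ ≤ f 0 - fmin := by linarith [hmin (T + 1)]

theorem Convex.frankWolfe_iterate_mem {K : Set E} (hK : Convex ℝ K) {b s : ℕ → E}
    {γ : ℕ → ℝ} (hb0 : b 0 ∈ K) (hs : ∀ t, s t ∈ K)
    (hγ : ∀ t, b t ∈ K → γ t ∈ Icc 0 1)
    (hupd : ∀ t, b (t + 1) = b t + γ t • (s t - b t)) : ∀ t, b t ∈ K
  | 0 => hb0
  | t + 1 => by
    have hbt := hK.frankWolfe_iterate_mem hb0 hs hγ hupd t
    exact hupd t ▸ hK.add_smul_sub_mem hbt (hs t) (hγ t hbt)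

theorem Convex.frankWolfe_step_le {K : Set E} (hK : Convex ℝ K) {F : E → ℝ}
    (hF : ∀ z ∈ K, DifferentiableAt ℝ F z) {L D : ℝ} (hL : 0 ≤ L)
    (hLip : ∀ x ∈ K, ∀ y ∈ K, ‖fderiv ℝ F x - fderiv ℝ F y‖ ≤ L * dist x y)
    {x s : E} (hx : x ∈ K) (hs : s ∈ K) (hsx : dist s x ≤ D) {γ : ℝ}
    (hγ : γ ∈ Icc 0 1) :
    F (x + γ • (s - x)) ≤ F x - (γ * fderiv ℝ F x (x - s) - γ ^ 2 * (L * D ^ 2) / 2) := by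
  have hdescent := hK.descent_lemma hF hLip hx (hK.add_smul_sub_mem hx hs hγ)
  have hstep : ‖γ • (s - x)‖ ^ 2 ≤ γ ^ 2 * D ^ 2 := by
    rw [norm_smul, mul_pow, Real.norm_eq_abs, sq_abs, ← dist_eq_norm]
    gcongr
  have hlin : fderiv ℝ F x (γ • (s - x)) = -(γ * fderiv ℝ F x (x - s)) := by
    rw [map_smul, ← neg_sub x s, map_neg, smul_eq_mul, mul_neg]
  rw [add_sub_cancel_left, hlin] at hdescent
  nlinarith [mul_le_mul_of_nonneg_left hstep (by positivity : 0 ≤ L / 2)]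

/-- Nonconvex Frank–Wolfe rate: Let `F` be differentiable with
`L`-Lipschitz gradient on a compact convex set `K` of diameter `D`, and let the
iterates satisfy `b^{(t+1)} = b^{(t)} + γ_t (s^{(t)} − b^{(t)})` with
`s^{(t)} ∈ argmin_{s∈K} ⟨∇F(b^{(t)}), s⟩`, gap
`g_t = ⟨b^{(t)} − s^{(t)}, ∇F(b^{(t)})⟩`, and step `γ_t = min{g_t/(L D²), 1}`.
Then `min_{0≤t≤T} g_t ≤ max{2(F(b⁰) − min_K F), L D²} / √(T+1)`. -/
theorem stmt15 {m : ℕ} (K : Set (EuclideanSpace ℝ (Fin m)))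
    (hKc : IsCompact K) (hKne : K.Nonempty) (hKconv : Convex ℝ K)
    (D L : ℝ) (hL : 0 < L)
    (hD : ∀ x ∈ K, ∀ y ∈ K, dist x y ≤ D)
    (F : EuclideanSpace ℝ (Fin m) → ℝ) (hFd : Differentiable ℝ F)
    (hLip : ∀ x ∈ K, ∀ y ∈ K, ‖fderiv ℝ F x - fderiv ℝ F y‖ ≤ L * dist x y)
    (b s : ℕ → EuclideanSpace ℝ (Fin m)) (γ gap : ℕ → ℝ)
    (hb0 : b 0 ∈ K)
    (hs : ∀ t, s t ∈ K ∧ ∀ u ∈ K, fderiv ℝ F (b t) (s t) ≤ fderiv ℝ F (b t) u)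
    (hgap : ∀ t, gap t = fderiv ℝ F (b t) (b t - s t))
    (hγ : ∀ t, γ t = min (gap t / (L * D ^ 2)) 1)
    (hupd : ∀ t, b (t + 1) = b t + γ t • (s t - b t))
    (T : ℕ) :
    ∃ t ≤ T, gap t ≤
      max (2 * (F (b 0) - sInf (F '' K))) (L * D ^ 2) / Real.sqrt (T + 1) := by
  obtain ⟨x₀, hx₀⟩ := hKne
  have hD0 : 0 ≤ D := dist_self x₀ ▸ hD x₀ hx₀ x₀ hx₀
  have hgap_nonneg : ∀ t, b t ∈ K → 0 ≤ gap t := fun t hbt => by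
    rw [hgap, map_sub, sub_nonneg]; exact (hs t).2 _ hbt
  have hγ_mem : ∀ t, b t ∈ K → γ t ∈ Icc 0 1 := fun t hbt => hγ t ▸
    ⟨le_min (div_nonneg (hgap_nonneg t hbt) (by positivity)) zero_le_one, min_le_right _ _⟩
  have hmem : ∀ t, b t ∈ K := hKconv.frankWolfe_iterate_mem hb0 (fun t => (hs t).1) hγ_mem hupd
  rcases hD0.eq_or_lt with rfl | hDpos
  · -- `K` is a point, so the gaps vanish (and the step `gap t / 0` is a junk value)
    refine ⟨0, T.zero_le, ?_⟩
    rw [hgap, dist_le_zero.1 (hD _ (hs 0).1 _ hb0), sub_self, map_zero]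
    positivity
  have hC : 0 < L * D ^ 2 := by positivity
  refine exists_le_max_div_sqrt_of_descent hC (fun t => hgap_nonneg t (hmem t)) (fun t => ?_)
    (fun t => csInf_le (hKc.image hFd.continuous).bddBelow ⟨_, hmem t, rfl⟩) T
  have hstep := hKconv.frankWolfe_step_le (fun z _ => hFd z) hL.le hLip (hmem t) (hs t).1
    (hD _ (hs t).1 _ (hmem t)) (hγ_mem t (hmem t))
  rw [← hupd, ← hgap, hγ] at hstep
  linarith [min_le_short_step_decrease (g := gap t) hC]
end
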